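/- Let ρ^c be the density matrix on ℂ²⊗ℂ² given by ρ^c = ½ (E₀⊗E₀) + ½ (E₁⊗E₁), where E₀, E₁ are the standard-basis rank-one projections on ℂ². Then N_H^b(ρ^c⊗ρ^c) = 3/4; in particular the measurement-induced nonbilocality can be strictly positive for a pair of separable input states. -/

import Mathlib

open scoped Matrix Kronecker BigOperators ComplexOrder
open Matrix

/-- The positive-semidefinite square root of a PSD matrix (0 if not PSD). -/
noncomputable def psdSqrt {N : Type*} [Fintype N] [DecidableEq N] (A : Matrix N N ℂ) :
    Matrix N N ℂ :=
  open scoped Classical in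
  if h : A.PosSemidef then
    (h.1.eigenvectorUnitary : Matrix N N ℂ) *
      Matrix.diagonal (fun i => ((Real.sqrt (h.1.eigenvalues i) : ℝ) : ℂ)) *
      (star h.1.eigenvectorUnitary : Matrix N N ℂ)
  else 0

/-- Squared Frobenius (Hilbert–Schmidt) norm: `‖X‖² = tr (Xᴴ X)`. -/
noncomputable def hsNormSq {N : Type*} [Fintype N] (X : Matrix N N ℂ) : ℝ :=
  (Matrix.trace (Xᴴ * X)).re

/-- A density matrix: positive semidefinite with unit trace. -/
def IsDensity {N : Type*} [Fintype N] [DecidableEq N] (ρ : Matrix N N ℂ) : Prop :=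
  ρ.PosSemidef ∧ ρ.trace = 1

/-- Standard inner product on `ℂ^N`. -/
noncomputable def cInner {N : Type*} [Fintype N] (x y : N → ℂ) : ℂ :=
  ∑ i, star (x i) * y i

/-- Outer product `ψ ψ†`. -/
noncomputable def outer {N : Type*} (ψ : N → ℂ) : Matrix N N ℂ :=
  Matrix.vecMulVec ψ (star ψ)

/-- The family of unit vectors of a rank-one von Neumann measurement: an orthonormal basis,
indexed by the dimension. -/
def IsVNM {N : Type*} [Fintype N] [DecidableEq N] (u : N → N → ℂ) : Prop :=
  ∀ a b, cInner (u a) (u b) = if a = b then (1 : ℂ) else 0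

/-- The rank-one projection `Π_h = u_h u_h†` of a measurement. -/
noncomputable def projOf {N : Type*} (u : N → N → ℂ) (h : N) : Matrix N N ℂ :=
  outer (u h)

/-- The measurement `{u_h u_h†}` fixes `σ`: `Σ_h Π_h σ Π_h = σ`. -/
def FixesVNM {N : Type*} [Fintype N] (u : N → N → ℂ) (σ : Matrix N N ℂ) : Prop :=
  ∑ h, projOf u h * σ * projOf u h = σ

/-- Reduced state of the second factor: `(ρ_B)_{j j'} = Σ_i ρ_{(i,j),(i,j')}`. -/
noncomputable def redB {m n : ℕ} (ρ : Matrix (Fin m × Fin n) (Fin m × Fin n) ℂ) :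
    Matrix (Fin n) (Fin n) ℂ :=
  Matrix.of fun j j' => ∑ i, ρ (i, j) (i, j')

/-- Reduced state of the first factor: `(ρ_C)_{k k'} = Σ_l ρ_{(k,l),(k',l)}`. -/
noncomputable def redC {u v : ℕ} (ρ : Matrix (Fin u × Fin v) (Fin u × Fin v) ℂ) :
    Matrix (Fin u) (Fin u) ℂ :=
  Matrix.of fun k k' => ∑ l, ρ (k, l) (k', l)

/-- `I_m ⊗ P ⊗ I_v` acting on the middle two factors. -/
noncomputable def ampMid (m v : ℕ) {n u : ℕ} (P : Matrix (Fin n × Fin u) (Fin n × Fin u) ℂ) :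
    Matrix ((Fin m × Fin n) × Fin u × Fin v) ((Fin m × Fin n) × Fin u × Fin v) ℂ :=
  Matrix.of fun p q =>
    (if p.1.1 = q.1.1 then (1 : ℂ) else 0) * P (p.1.2, p.2.1) (q.1.2, q.2.1) *
      (if p.2.2 = q.2.2 then (1 : ℂ) else 0)

/-- The map `Π^{BC}(X) = Σ_h (I_m ⊗ Π_h ⊗ I_v) X (I_m ⊗ Π_h ⊗ I_v)`. -/
noncomputable def pinchBC {m n u v : ℕ} (w : (Fin n × Fin u) → (Fin n × Fin u) → ℂ)
    (X : Matrix ((Fin m × Fin n) × Fin u × Fin v) ((Fin m × Fin n) × Fin u × Fin v) ℂ) :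
    Matrix ((Fin m × Fin n) × Fin u × Fin v) ((Fin m × Fin n) × Fin u × Fin v) ℂ :=
  ∑ h, ampMid m v (projOf w h) * X * ampMid m v (projOf w h)

/-- The measurement-induced nonbilocality `N_H^b(ρ_AB ⊗ ρ_CD)`. -/
noncomputable def NHb {m n u v : ℕ}
    (ρAB : Matrix (Fin m × Fin n) (Fin m × Fin n) ℂ)
    (ρCD : Matrix (Fin u × Fin v) (Fin u × Fin v) ℂ) : ℝ :=
  sSup { r : ℝ | ∃ w : (Fin n × Fin u) → (Fin n × Fin u) → ℂ,
    IsVNM w ∧ FixesVNM w (redB ρAB ⊗ₖ redC ρCD) ∧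
    r = hsNormSq (psdSqrt (ρAB ⊗ₖ ρCD) - pinchBC w (psdSqrt (ρAB ⊗ₖ ρCD))) }

/-- A separable density matrix on `ℂ^p ⊗ ℂ^q`. -/
def Separable {p q : ℕ} (τ : Matrix (Fin p × Fin q) (Fin p × Fin q) ℂ) : Prop :=
  ∃ (k : ℕ) (t : Fin k → ℝ) (σ : Fin k → Matrix (Fin p) (Fin p) ℂ)
    (ω : Fin k → Matrix (Fin q) (Fin q) ℂ),
    (∀ i, 0 ≤ t i) ∧ (∀ i, IsDensity (σ i)) ∧ (∀ i, IsDensity (ω i)) ∧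
      τ = ∑ i, ((t i : ℝ) : ℂ) • (σ i ⊗ₖ ω i)

/-- The classical two-qubit state `ρ^c = ½ E₀⊗E₀ + ½ E₁⊗E₁`. -/
noncomputable def rhoc : Matrix (Fin 2 × Fin 2) (Fin 2 × Fin 2) ℂ :=
  ((1 / 2 : ℝ) : ℂ) •
      (Matrix.single 0 0 (1 : ℂ) ⊗ₖ Matrix.single 0 0 (1 : ℂ)) +
    ((1 / 2 : ℝ) : ℂ) •
      (Matrix.single 1 1 (1 : ℂ) ⊗ₖ Matrix.single 1 1 (1 : ℂ))

/-!
`√(ρᶜ ⊗ ρᶜ)` is the diagonal matrix `S` with entry `1/2` at the four indices `((a, a), (c, c))`.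
A pinching `Π` by orthogonal projections is an orthogonal projection for the Hilbert–Schmidt
inner product, so `‖S - Π S‖² = ‖S‖² - ⟨S, Π S⟩ = 1 - ¼ Σ_{h,x} |w h x|⁴`, where `w` is the
measurement basis on `BC`. The columns of the unitary `(w h x)` are unit vectors, so by
Cauchy–Schwarz `Σ_{h,x} |w h x|⁴ ≥ 1`, with equality for any basis unbiased with respect to the
computational one, e.g. the Hadamard basis. The fixing constraint is void since `ρ_B ⊗ ρ_C = I / 4`.
-/

section OrthonormalBasis

variable {N : Type*} [Fintype N] [DecidableEq N] {w : N → N → ℂ}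

omit [Fintype N] [DecidableEq N] in
lemma conjTranspose_projOf (w : N → N → ℂ) (h : N) : (projOf w h)ᴴ = projOf w h := by
  simp [projOf, outer, conjTranspose_vecMulVec]

omit [Fintype N] [DecidableEq N] in
lemma projOf_apply_self (w : N → N → ℂ) (h x : N) :
    projOf w h x x = (Complex.normSq (w h x) : ℂ) := by
  rw [projOf, outer, vecMulVec_apply, Pi.star_apply, Complex.star_def, Complex.mul_conj]

lemma projOf_mul_projOf (hw : IsVNM w) (h h' : N) :
    projOf w h * projOf w h' = if h = h' then projOf w h else 0 := by
  ext i j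
  have key : ∑ k, w h i * star (w h k) * (w h' k * star (w h' j))
      = cInner (w h) (w h') * (w h i * star (w h' j)) := by
    rw [cInner, Finset.sum_mul]
    exact Finset.sum_congr rfl fun k _ => by ring
  simp only [projOf, outer, mul_apply, vecMulVec_apply, Pi.star_apply, key, hw h h']
  split_ifs with hh <;> simp [hh, vecMulVec_apply]

lemma IsVNM.conjTranspose_mul_self (hw : IsVNM w) : (Matrix.of w)ᴴ * Matrix.of w = 1 := by
  refine mul_eq_one_comm.mp ?_
  ext a b
  simpa [mul_apply, cInner, mul_comm, one_apply] using congrArg star (hw a b)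

lemma sum_projOf (hw : IsVNM w) : ∑ h, projOf w h = 1 := by
  ext i j
  have := congrArg star (congrFun₂ hw.conjTranspose_mul_self i j)
  simpa [Matrix.sum_apply, projOf, outer, vecMulVec_apply, mul_apply, one_apply, eq_comm,
    mul_comm] using this

lemma sum_normSq_apply (hw : IsVNM w) (x : N) : ∑ h, Complex.normSq (w h x) = 1 := by
  have := congrFun₂ (sum_projOf hw) x x
  simp only [Matrix.sum_apply, projOf_apply_self, one_apply_eq] at this
  exact_mod_cast this

lemma fixesVNM_smul_one (hw : IsVNM w) (c : ℂ) : FixesVNM w (c • 1) := by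
  simp only [FixesVNM, Matrix.mul_smul, Matrix.mul_one, Matrix.smul_mul, projOf_mul_projOf hw,
    if_true, ← Finset.smul_sum, sum_projOf hw]

lemma one_le_sum_sum_normSq_sq [Nonempty N] (hw : IsVNM w) :
    1 ≤ ∑ h, ∑ x, Complex.normSq (w h x) ^ 2 := by
  have hcard : (0 : ℝ) < Fintype.card N := by exact_mod_cast Fintype.card_pos
  have hcol : ∀ x, 1 / (Fintype.card N : ℝ) ≤ ∑ h, Complex.normSq (w h x) ^ 2 := fun x => by
    have := sq_sum_le_card_mul_sum_sq (s := Finset.univ) (f := fun h => Complex.normSq (w h x))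
    rw [sum_normSq_apply hw, Finset.card_univ] at this
    rw [div_le_iff₀' hcard]
    linarith
  calc (1 : ℝ) = ∑ _x : N, 1 / (Fintype.card N : ℝ) := by
        rw [Finset.sum_const, Finset.card_univ, nsmul_eq_mul, mul_one_div_cancel hcard.ne']
    _ ≤ ∑ x, ∑ h, Complex.normSq (w h x) ^ 2 := Finset.sum_le_sum fun x _ => hcol x
    _ = ∑ h, ∑ x, Complex.normSq (w h x) ^ 2 := Finset.sum_comm

end OrthonormalBasis

section Pinching

variable {ι N : Type*} [Fintype ι] [Fintype N] (P : ι → Matrix N N ℂ)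

noncomputable def pinching (X : Matrix N N ℂ) : Matrix N N ℂ := ∑ i, P i * X * P i

lemma trace_mul_pinching (X Y : Matrix N N ℂ) :
    trace (Y * pinching P X) = trace (pinching P Y * X) := by
  simp only [pinching, Finset.mul_sum, Finset.sum_mul, trace_sum, ← mul_assoc]
  refine Finset.sum_congr rfl fun i _ => ?_
  rw [trace_mul_comm]
  simp only [mul_assoc]

variable {P}

lemma conjTranspose_pinching (hP : ∀ i, (P i)ᴴ = P i) (X : Matrix N N ℂ) :
    (pinching P X)ᴴ = pinching P Xᴴ := by
  simp only [pinching, conjTranspose_sum, conjTranspose_mul, hP, mul_assoc]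

lemma pinching_pinching [DecidableEq ι] (hP : ∀ i j, P i * P j = if i = j then P i else 0)
    (X : Matrix N N ℂ) : pinching P (pinching P X) = pinching P X := by
  have hterm : ∀ i j, P i * (P j * X * P j) * P i = if i = j then P i * X * P i else 0 := by
    intro i j
    calc P i * (P j * X * P j) * P i = (P i * P j) * X * (P j * P i) := by simp only [mul_assoc]
      _ = _ := by
        rw [hP, hP]
        by_cases h : i = j
        · simp [h]
        · simp [h, Ne.symm h]
  simp only [pinching, Finset.mul_sum, Finset.sum_mul, hterm, Finset.sum_ite_eq,
    Finset.mem_univ, if_true]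

lemma hsNormSq_sub_pinching [DecidableEq ι] (hPh : ∀ i, (P i)ᴴ = P i)
    (hP : ∀ i j, P i * P j = if i = j then P i else 0) (X : Matrix N N ℂ) :
    hsNormSq (X - pinching P X) = hsNormSq X - (trace (Xᴴ * pinching P X)).re := by
  have hcross : trace ((pinching P X)ᴴ * X) = trace (Xᴴ * pinching P X) := by
    rw [conjTranspose_pinching hPh, trace_mul_pinching]
  have hsquare : trace ((pinching P X)ᴴ * pinching P X) = trace (Xᴴ * pinching P X) := by
    rw [conjTranspose_pinching hPh, ← trace_mul_pinching, pinching_pinching hP]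
  simp only [hsNormSq, conjTranspose_sub, sub_mul, mul_sub, trace_sub, hcross, hsquare,
    Complex.sub_re]
  ring

end Pinching

section AmpMid

variable (m v : ℕ) {n u : ℕ}

lemma ampMid_mul (M M' : Matrix (Fin n × Fin u) (Fin n × Fin u) ℂ) :
    ampMid m v M * ampMid m v M' = ampMid m v (M * M') := by
  ext ⟨⟨a, x1⟩, x2, b⟩ ⟨⟨c, y1⟩, y2, d⟩
  simp only [ampMid, mul_apply, of_apply, Fintype.sum_prod_type]
  by_cases hac : a = c <;> by_cases hbd : b = d <;>
    simp [hac, hbd, Finset.mul_sum]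

lemma conjTranspose_ampMid (M : Matrix (Fin n × Fin u) (Fin n × Fin u) ℂ) :
    (ampMid m v M)ᴴ = ampMid m v Mᴴ := by
  ext p q
  simp only [ampMid, conjTranspose_apply, of_apply, star_mul', apply_ite star, star_one,
    star_zero, eq_comm (a := p.1.1), eq_comm (a := p.2.2)]

variable {m v}

lemma ampMid_projOf_mul_ampMid_projOf {w : (Fin n × Fin u) → (Fin n × Fin u) → ℂ}
    (hw : IsVNM w) (h h' : Fin n × Fin u) :
    ampMid m v (projOf w h) * ampMid m v (projOf w h') =
      if h = h' then ampMid m v (projOf w h) else 0 := by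
  rw [ampMid_mul, projOf_mul_projOf hw]
  split_ifs
  · rfl
  · ext; simp [ampMid]

lemma hsNormSq_sub_pinchBC {w : (Fin n × Fin u) → (Fin n × Fin u) → ℂ} (hw : IsVNM w)
    (X : Matrix ((Fin m × Fin n) × Fin u × Fin v) ((Fin m × Fin n) × Fin u × Fin v) ℂ) :
    hsNormSq (X - pinchBC w X) = hsNormSq X - (trace (Xᴴ * pinchBC w X)).re :=
  hsNormSq_sub_pinching (fun h => by rw [conjTranspose_ampMid, conjTranspose_projOf])
    (ampMid_projOf_mul_ampMid_projOf hw) X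

end AmpMid

open scoped MatrixOrder in
lemma psdSqrt_mul_self {N : Type*} [Fintype N] [DecidableEq N] {A : Matrix N N ℂ}
    (hA : A.PosSemidef) : psdSqrt (A * A) = A := by
  have hAA : (A * A).PosSemidef := by
    simpa [hA.1.eq] using Matrix.posSemidef_conjTranspose_mul_self A
  rw [psdSqrt, dif_pos hAA]
  refine (hAA.1.cfc_eq Real.sqrt).symm.trans ?_
  rw [← cfcₙ_eq_cfc (hf := Real.continuous_sqrt.continuousOn) (hf0 := Real.sqrt_zero),
    ← CFC.sqrt_eq_real_sqrt _ hAA.nonneg, CFC.sqrt_mul_self A hA.nonneg]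

section ClassicalState

lemma rhoc_apply (a b : Fin 2 × Fin 2) :
    rhoc a b = if a = b ∧ a.1 = a.2 then (1 / 2 : ℂ) else 0 := by
  obtain ⟨a1, a2⟩ := a
  obtain ⟨b1, b2⟩ := b
  fin_cases a1 <;> fin_cases a2 <;> fin_cases b1 <;> fin_cases b2 <;>
    norm_num [rhoc, Matrix.single, Prod.ext_iff]

noncomputable def sqrtRhocKron :
    Matrix ((Fin 2 × Fin 2) × Fin 2 × Fin 2) ((Fin 2 × Fin 2) × Fin 2 × Fin 2) ℂ :=
  diagonal fun p => if p.1.1 = p.1.2 ∧ p.2.1 = p.2.2 then 1 / 2 else 0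

lemma posSemidef_sqrtRhocKron : sqrtRhocKron.PosSemidef := by
  refine posSemidef_diagonal_iff.mpr fun p => ?_
  split_ifs
  · exact_mod_cast one_half_pos.le
  · rfl

lemma rhoc_kron_rhoc : rhoc ⊗ₖ rhoc = sqrtRhocKron * sqrtRhocKron := by
  ext ⟨⟨a, b⟩, c, d⟩ ⟨⟨a', b'⟩, c', d'⟩
  simp only [kroneckerMap_apply, rhoc_apply, sqrtRhocKron, diagonal_mul_diagonal, diagonal_apply,
    Prod.ext_iff]
  split_ifs <;> first | tauto | norm_num

lemma psdSqrt_rhoc_kron_rhoc : psdSqrt (rhoc ⊗ₖ rhoc) = sqrtRhocKron := by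
  rw [rhoc_kron_rhoc, psdSqrt_mul_self posSemidef_sqrtRhocKron]

lemma hsNormSq_sqrtRhocKron : hsNormSq sqrtRhocKron = 1 := by
  simp only [hsNormSq, sqrtRhocKron, diagonal_conjTranspose, diagonal_mul_diagonal,
    trace_diagonal, Fintype.sum_prod_type, Fin.sum_univ_two]
  norm_num

lemma trace_sqrtRhocKron_mul_ampMid (M : Matrix (Fin 2 × Fin 2) (Fin 2 × Fin 2) ℂ) :
    trace (sqrtRhocKron * ampMid 2 2 M * sqrtRhocKron * ampMid 2 2 M) =
      1 / 4 * ∑ x, M x x ^ 2 := by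
  simp only [trace, diag_apply, sqrtRhocKron, mul_apply, diagonal_apply, ampMid, of_apply,
    Fintype.sum_prod_type, Fin.sum_univ_two]
  norm_num
  ring

lemma re_trace_sqrtRhocKron_mul_pinchBC (w : (Fin 2 × Fin 2) → (Fin 2 × Fin 2) → ℂ) :
    (trace (sqrtRhocKronᴴ * pinchBC w sqrtRhocKron)).re =
      1 / 4 * ∑ h, ∑ x, Complex.normSq (w h x) ^ 2 := by
  rw [posSemidef_sqrtRhocKron.1.eq, pinchBC, Finset.mul_sum, trace_sum, Finset.mul_sum]
  refine (Complex.re_sum ..).trans (Finset.sum_congr rfl fun h _ => ?_)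
  rw [← mul_assoc, ← mul_assoc, trace_sqrtRhocKron_mul_ampMid]
  simp only [projOf_apply_self, ← Complex.ofReal_pow, ← Complex.ofReal_sum, Complex.re_mul_ofReal]
  norm_num

lemma hsNormSq_sub_pinchBC_sqrtRhocKron {w : (Fin 2 × Fin 2) → (Fin 2 × Fin 2) → ℂ}
    (hw : IsVNM w) :
    hsNormSq (sqrtRhocKron - pinchBC w sqrtRhocKron) =
      1 - 1 / 4 * ∑ h, ∑ x, Complex.normSq (w h x) ^ 2 := by
  rw [hsNormSq_sub_pinchBC hw, hsNormSq_sqrtRhocKron, re_trace_sqrtRhocKron_mul_pinchBC]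

lemma redB_rhoc : redB rhoc = (1 / 2 : ℂ) • 1 := by
  ext j j'
  fin_cases j <;> fin_cases j' <;> norm_num [redB, rhoc_apply, Fin.sum_univ_two, Prod.ext_iff]

lemma redC_rhoc : redC rhoc = (1 / 2 : ℂ) • 1 := by
  ext k k'
  fin_cases k <;> fin_cases k' <;> norm_num [redC, rhoc_apply, Fin.sum_univ_two, Prod.ext_iff]

lemma fixesVNM_redB_kron_redC_rhoc {w : (Fin 2 × Fin 2) → (Fin 2 × Fin 2) → ℂ} (hw : IsVNM w) :
    FixesVNM w (redB rhoc ⊗ₖ redC rhoc) := by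
  rw [redB_rhoc, redC_rhoc, smul_kronecker, kronecker_smul, one_kronecker_one, smul_smul]
  exact fixesVNM_smul_one hw _

lemma isDensity_single (i : Fin 2) : IsDensity (single i i (1 : ℂ)) := by
  refine ⟨?_, trace_single_eq_same ..⟩
  rw [← diagonal_single, posSemidef_diagonal_iff]
  intro j
  rw [Pi.single_apply]
  split_ifs
  · exact zero_le_one
  · rfl

lemma separable_rhoc : Separable rhoc := by
  refine ⟨2, ![1 / 2, 1 / 2], ![single 0 0 1, single 1 1 1], ![single 0 0 1, single 1 1 1],
    ?_, ?_, ?_, ?_⟩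
  · intro i; fin_cases i <;> norm_num
  · intro i; fin_cases i <;> exact isDensity_single _
  · intro i; fin_cases i <;> exact isDensity_single _
  · rw [Fin.sum_univ_two]; rfl

end ClassicalState

def hadamard2 : Fin 2 → Fin 2 → ℝ := ![![1, 1], ![1, -1]]

noncomputable def hadamardBasis : (Fin 2 × Fin 2) → (Fin 2 × Fin 2) → ℂ :=
  fun h x => ((hadamard2 h.1 x.1 * hadamard2 h.2 x.2 / 2 : ℝ) : ℂ)

lemma isVNM_hadamardBasis : IsVNM hadamardBasis := by
  rintro ⟨a, b⟩ ⟨c, d⟩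
  fin_cases a <;> fin_cases b <;> fin_cases c <;> fin_cases d <;>
    norm_num [cInner, hadamardBasis, hadamard2, Fintype.sum_prod_type, Fin.sum_univ_two,
      Complex.ext_iff]

lemma sum_sum_normSq_hadamardBasis_sq :
    ∑ h, ∑ x, Complex.normSq (hadamardBasis h x) ^ 2 = 1 := by
  simp only [hadamardBasis, Complex.normSq_ofReal, Fintype.sum_prod_type, Fin.sum_univ_two]
  norm_num [hadamard2]

/-- `N_H^b(ρ^c ⊗ ρ^c) = 3/4`; in particular the nonbilocality is strictly
positive although ρ^c is separable. -/
theorem stmt18 :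
    NHb rhoc rhoc = 3 / 4 ∧ Separable rhoc ∧ 0 < NHb rhoc rhoc := by
  have hNHb : NHb rhoc rhoc = 3 / 4 := by
    refine IsGreatest.csSup_eq ⟨⟨hadamardBasis, isVNM_hadamardBasis,
      fixesVNM_redB_kron_redC_rhoc isVNM_hadamardBasis, ?_⟩, ?_⟩
    · rw [psdSqrt_rhoc_kron_rhoc, hsNormSq_sub_pinchBC_sqrtRhocKron isVNM_hadamardBasis,
        sum_sum_normSq_hadamardBasis_sq]
      norm_num
    · rintro r ⟨w, hw, -, rfl⟩
      rw [psdSqrt_rhoc_kron_rhoc, hsNormSq_sub_pinchBC_sqrtRhocKron hw]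
      linarith [one_le_sum_sum_normSq_sq hw]
  exact ⟨hNHb, separable_rhoc, by norm_num [hNHb]⟩
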